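/- arXiv:2203.15548 — 2 statements merged into one kernel-verified Lean document; each statement's English description precedes it below -/
import Mathlib

section
/- Energy descent (Theorem 3.2, discrete form). Let P be any type, K ≥ 1, n ≥ 1, let W be a real symmetric positive semidefinite n×n matrix, 𝟙 ∈ ℝ^n the all-ones vector, and λ ≥ 0. For u = (u_1,…,u_K) ∈ (ℝ^n)^K define R(u) = ∑_{k=1}^K ⟨u_k, W(𝟙 − u_k)⟩ and Lin(v; u) = ∑_{k=1}^K ⟨v_k, W(𝟙 − 2u_k)⟩. Let F : P × (ℝ^n)^K → ℝ be any function, and let sequences (Θ^t) in P and (u^t) in (ℝ^n)^K satisfy, for every t: (i) F(Θ^{t+1}, u^t) ≤ F(Θ^t, u^t), and (ii) F(Θ^{t+1}, u^{t+1}) + λ·Lin(u^{t+1}; u^t) ≤ F(Θ^{t+1}, u^t) + λ·Lin(u^t; u^t). Then the energy Ê(Θ, u) = F(Θ, u) + λ·R(u) satisfies Ê(Θ^{t+1}, u^{t+1}) ≤ Ê(Θ^t, u^t) for every t. -/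
open Real Finset Matrix

namespace Matrix.PosSemidef

variable {ι : Type*} [Fintype ι] {W : Matrix ι ι ℝ}

/-- The concave quadratic `v ↦ ⟨v, W (c - v)⟩` lies below its tangent at `w`: the gap is
`⟨v - w, W (v - w)⟩ ≥ 0`. -/
theorem dotProduct_mulVec_sub_le_tangent (hW : W.PosSemidef) (c v w : ι → ℝ) :
    v ⬝ᵥ W *ᵥ (c - v) ≤ w ⬝ᵥ W *ᵥ (c - w) + (v - w) ⬝ᵥ W *ᵥ (c - 2 • w) := by
  have hgap := hW.dotProduct_mulVec_nonneg (v - w)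
  have hsymm : w ⬝ᵥ W *ᵥ v = v ⬝ᵥ W *ᵥ w := by
    have hT : Wᵀ = W := hW.isHermitian
    conv_lhs => rw [dotProduct_mulVec, ← hT, vecMul_transpose, dotProduct_comm]
  simp only [two_smul, mulVec_add, mulVec_sub, dotProduct_add, dotProduct_sub, sub_dotProduct,
    star_trivial] at hgap ⊢
  linarith

theorem sum_dotProduct_mulVec_sub_le_tangent {κ : Type*} [Fintype κ] (hW : W.PosSemidef)
    (c : ι → ℝ) (v w : κ → ι → ℝ) :
    ∑ k, v k ⬝ᵥ W *ᵥ (c - v k)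
      ≤ ∑ k, w k ⬝ᵥ W *ᵥ (c - w k)
        + (∑ k, v k ⬝ᵥ W *ᵥ (c - 2 • w k) - ∑ k, w k ⬝ᵥ W *ᵥ (c - 2 • w k)) := by
  rw [← sum_sub_distrib, ← sum_add_distrib]
  refine sum_le_sum fun k _ => ?_
  simpa only [sub_dotProduct] using hW.dotProduct_mulVec_sub_le_tangent c (v k) (w k)

end Matrix.PosSemidef

theorem stmt8_general (P : Type*) (K n : ℕ)
    (W : Matrix (Fin n) (Fin n) ℝ) (hWpsd : W.PosSemidef)
    (lam : ℝ) (hlam : 0 ≤ lam)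
    (F : P → (Fin K → Fin n → ℝ) → ℝ)
    (Θ : ℕ → P) (u : ℕ → Fin K → Fin n → ℝ)
    (hi : ∀ t : ℕ, F (Θ (t + 1)) (u t) ≤ F (Θ t) (u t))
    (hii : ∀ t : ℕ,
      F (Θ (t + 1)) (u (t + 1))
          + lam * ∑ k, (u (t + 1) k) ⬝ᵥ W.mulVec ((fun _ => 1) - 2 • u t k)
        ≤ F (Θ (t + 1)) (u t)
          + lam * ∑ k, (u t k) ⬝ᵥ W.mulVec ((fun _ => 1) - 2 • u t k)) :
    ∀ t : ℕ,
      F (Θ (t + 1)) (u (t + 1))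
          + lam * ∑ k, (u (t + 1) k) ⬝ᵥ W.mulVec ((fun _ => 1) - u (t + 1) k)
        ≤ F (Θ t) (u t)
          + lam * ∑ k, (u t k) ⬝ᵥ W.mulVec ((fun _ => 1) - u t k) := by
  intro t
  have hR := mul_le_mul_of_nonneg_left
    (hWpsd.sum_dotProduct_mulVec_sub_le_tangent (fun _ => 1) (u (t + 1)) (u t)) hlam
  linarith [hi t, hii t]

/-- **Energy descent (Theorem 3.2, discrete form).**
With `R(u) = ∑ k, ⟨u k, W(𝟙 − u k)⟩` and `Lin(v; u) = ∑ k, ⟨v k, W(𝟙 − 2 u k)⟩`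
for a symmetric positive semidefinite `W` and `λ ≥ 0`, any sequences `(Θ^t)`, `(u^t)`
satisfying the alternating descent conditions (i) and (ii) make the energy
`Ê(Θ, u) = F(Θ, u) + λ·R(u)` non-increasing. -/
theorem stmt8 (P : Type*) (K n : ℕ) (hK : 1 ≤ K) (hn : 1 ≤ n)
    (W : Matrix (Fin n) (Fin n) ℝ) (hWsymm : W.IsSymm) (hWpsd : W.PosSemidef)
    (lam : ℝ) (hlam : 0 ≤ lam)
    (F : P → (Fin K → Fin n → ℝ) → ℝ)
    (Θ : ℕ → P) (u : ℕ → Fin K → Fin n → ℝ)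
    (hi : ∀ t : ℕ, F (Θ (t + 1)) (u t) ≤ F (Θ t) (u t))
    (hii : ∀ t : ℕ,
      F (Θ (t + 1)) (u (t + 1))
          + lam * ∑ k, (u (t + 1) k) ⬝ᵥ W.mulVec ((fun _ => 1) - 2 • u t k)
        ≤ F (Θ (t + 1)) (u t)
          + lam * ∑ k, (u t k) ⬝ᵥ W.mulVec ((fun _ => 1) - 2 • u t k)) :
    ∀ t : ℕ,
      F (Θ (t + 1)) (u (t + 1))
          + lam * ∑ k, (u (t + 1) k) ⬝ᵥ W.mulVec ((fun _ => 1) - u (t + 1) k)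
        ≤ F (Θ t) (u t)
          + lam * ∑ k, (u t k) ⬝ᵥ W.mulVec ((fun _ => 1) - u t k) :=
  stmt8_general P K n W hWpsd lam hlam F Θ u hi hii
end

section
/- Bias-field update: let A > 0, m > 0 and b ∈ ℝ, and define f : (0, ∞) → ℝ by f(β) = A/(2β²) − b/β + m·log β. Then f attains a unique global minimum on (0, ∞), at the point β* = (−b + √(b² + 4mA)) / (2m) > 0; i.e. f(β) ≥ f(β*) for all β > 0, with equality if and only if β = β*. (With m = 1, A = v + ζ I_f², b = s + p, this is the closed-form β-update in (3.8).) -/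
open Real

/-- **Bias-field update.** For `A > 0`, `m > 0`, `b ∈ ℝ`, the function
`f(β) = A/(2β²) − b/β + m·log β` on `(0, ∞)` attains a unique global minimum at
`β* = (−b + √(b² + 4mA)) / (2m) > 0`: `f(β*) ≤ f(β)` for all `β > 0`,
with equality iff `β = β*`. -/
theorem stmt11 (A m b : ℝ) (hA : 0 < A) (hm : 0 < m) :
    0 < (-b + Real.sqrt (b ^ 2 + 4 * m * A)) / (2 * m) ∧
    (∀ β : ℝ, 0 < β →
      (A / (2 * ((-b + Real.sqrt (b ^ 2 + 4 * m * A)) / (2 * m)) ^ 2)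
          - b / ((-b + Real.sqrt (b ^ 2 + 4 * m * A)) / (2 * m))
          + m * Real.log ((-b + Real.sqrt (b ^ 2 + 4 * m * A)) / (2 * m))
        ≤ A / (2 * β ^ 2) - b / β + m * Real.log β) ∧
      ((A / (2 * β ^ 2) - b / β + m * Real.log β
          = A / (2 * ((-b + Real.sqrt (b ^ 2 + 4 * m * A)) / (2 * m)) ^ 2)
            - b / ((-b + Real.sqrt (b ^ 2 + 4 * m * A)) / (2 * m))
            + m * Real.log ((-b + Real.sqrt (b ^ 2 + 4 * m * A)) / (2 * m))) ↔
        β = (-b + Real.sqrt (b ^ 2 + 4 * m * A)) / (2 * m))) := by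
  have hnn : (0:ℝ) ≤ b ^ 2 + 4 * m * A := by nlinarith [sq_nonneg b]
  set c := Real.sqrt (b ^ 2 + 4 * m * A) with hc
  have hc2 : c ^ 2 = b ^ 2 + 4 * m * A := Real.sq_sqrt hnn
  have hc0 : 0 ≤ c := Real.sqrt_nonneg _
  have hcb : b < c := by nlinarith
  set p := (-b + c) / (2 * m) with hpdef
  have hp : 0 < p := div_pos (by linarith) (by linarith)
  have hkey : m * p ^ 2 + b * p = A := by
    have h2m : (2 * m) ≠ 0 := by positivity
    rw [hpdef]
    field_simp
    nlinarith [hc2]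
  have hstrict : ∀ β : ℝ, 0 < β → β ≠ p →
      A / (2 * p ^ 2) - b / p + m * Real.log p
        < A / (2 * β ^ 2) - b / β + m * Real.log β := by
    intro β hβ hne
    have hlog : Real.log p - Real.log β < p / β - 1 := by
      have h1 : Real.log (p / β) < p / β - 1 := by
        apply Real.log_lt_sub_one_of_pos (div_pos hp hβ)
        exact fun h => hne ((div_eq_one_iff_eq hβ.ne').mp h).symm
      rwa [Real.log_div hp.ne' hβ.ne'] at h1
    have hpoly : 0 ≤ A / (2 * β ^ 2) - b / β - (A / (2 * p ^ 2) - b / p)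
        + m * (1 - p / β) := by
      have hid : A / (2 * β ^ 2) - b / β - (A / (2 * p ^ 2) - b / p)
          + m * (1 - p / β) = A * (p - β) ^ 2 / (2 * β ^ 2 * p ^ 2) := by
        rw [← hkey]
        field_simp
        ring
      rw [hid]
      exact div_nonneg (mul_nonneg hA.le (sq_nonneg _)) (by positivity)
    nlinarith [mul_lt_mul_of_pos_left hlog hm]
  refine ⟨hp, fun β hβ => ⟨?_, ?_⟩⟩
  · by_cases h : β = p
    · rw [h]
    · exact (hstrict β hβ h).le
  · constructor
    · intro heq
      by_contra hne
      exact (hstrict β hβ hne).ne' heq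
    · intro h
      rw [h]
end
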